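/- arXiv:2510.06385 — 2 statements merged into one kernel-verified Lean document; each statement's English description precedes it below -/
import Mathlib

section
/- Matrix decomposition lemma (operator norm bound): in the setting of the matrix decomposition construction, if each U_t has operator norm at most 1, then each enlarged matrix Ũ_t also has operator norm at most 1. Specifically: the matrix Ũ_t with entries Ũ_t[(I_t,S_t),(I_{t+1},S_{t+1})] = U_t[I_t,I_{t+1}]·1[S_{t+1} = update_t(S_t,i_t)] has operator norm at most 1, where update_t(S,i) equals S⊕{i} or S according to fixed conditions on t and i that depend only on t and the first component i of I_t. -/
/-- Operator (spectral) norm of a rectangular complex matrix. -/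
noncomputable def opNorm {m n : Type*} [Fintype m] [Fintype n] [DecidableEq n]
    (A : Matrix m n ℂ) : ℝ :=
  ‖LinearMap.toContinuousLinearMap (Matrix.toEuclideanLin A)‖

/-- Matrix decomposition lemma (operator norm bound): if `‖U‖_op ≤ 1` and the update
rule `u` sends, for each first component `i`, either every `S` to `S ⊕ {i}` or every
`S` to itself (the choice depending only on `i`, as in the update rule of the
matrix decomposition), then the enlarged matrix
`Ũ[(I,S),(I',S')] = U[I,I']·1[S' = u i_I S]` has operator norm at most `1`. -/
theorem opNorm_enlarged_le_one (N W : ℕ)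
    (U : Matrix (Fin N × Fin W) (Fin N × Fin W) ℂ) (hU : opNorm U ≤ 1)
    (u : Fin N → Finset (Fin N) → Finset (Fin N))
    (hu : ∀ i : Fin N, (∀ S, u i S = symmDiff S {i}) ∨ (∀ S, u i S = S)) :
    opNorm (Matrix.of fun (p q : (Fin N × Fin W) × Finset (Fin N)) =>
        U p.1 q.1 * (if q.2 = u p.1.1 p.2 then 1 else 0)) ≤ 1 := by
  apply ContinuousLinearMap.opNorm_le_bound _ zero_le_one
  intro x
  rw [one_mul, LinearMap.coe_toContinuousLinearMap']
  set A : Matrix ((Fin N × Fin W) × Finset (Fin N)) ((Fin N × Fin W) × Finset (Fin N)) ℂ :=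
    Matrix.of fun p q => U p.1 q.1 * (if q.2 = u p.1.1 p.2 then 1 else 0) with hA
  set g : (Fin N × Fin W) × Finset (Fin N) → ℂ :=
    fun p => ∑ I' : Fin N × Fin W, U p.1 I' * x (I', p.2) with hg
  have hinv : ∀ i S, u i (u i S) = S := by
    intro i S
    rcases hu i with h | h
    · simp [h, symmDiff_symmDiff_cancel_right]
    · simp [h]
  set f : (Fin N × Fin W) × Finset (Fin N) → (Fin N × Fin W) × Finset (Fin N) :=
    fun p => (p.1, u p.1.1 p.2) with hf
  have hfinv : Function.Involutive f := by
    intro p; simp [hf, hinv]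
  have happly : ∀ p, Matrix.toEuclideanLin A x p = g (f p) := by
    intro p
    rw [Matrix.toEuclideanLin_apply]
    simp only [PiLp.toLp_apply, Matrix.mulVec, dotProduct]
    rw [Fintype.sum_prod_type]
    simp [hA, hg, hf, mul_ite, ite_mul, Finset.sum_ite_eq']
  -- column vector norms
  have hcol : ∀ S : Finset (Fin N), ∑ I : Fin N × Fin W, ‖g (I, S)‖ ^ 2
      ≤ ∑ I : Fin N × Fin W, ‖x (I, S)‖ ^ 2 := by
    intro S
    set v : EuclideanSpace ℂ (Fin N × Fin W) :=
      (WithLp.equiv 2 _).symm (fun I' => x (I', S)) with hv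
    have h1 : ‖Matrix.toEuclideanLin U v‖ ≤ ‖v‖ := by
      have h2 := (LinearMap.toContinuousLinearMap (Matrix.toEuclideanLin U)).le_opNorm v
      rw [LinearMap.coe_toContinuousLinearMap'] at h2
      calc ‖Matrix.toEuclideanLin U v‖ ≤ opNorm U * ‖v‖ := h2
        _ ≤ 1 * ‖v‖ := by gcongr
        _ = ‖v‖ := one_mul _
    have hUv : ∀ I, Matrix.toEuclideanLin U v I = g (I, S) := by
      intro I
      rw [Matrix.toEuclideanLin_apply]
      simp [Matrix.mulVec, dotProduct, hg, hv]
    have h3 : ‖Matrix.toEuclideanLin U v‖ ^ 2 ≤ ‖v‖ ^ 2 :=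
      pow_le_pow_left₀ (norm_nonneg _) h1 2
    rw [EuclideanSpace.norm_eq, EuclideanSpace.norm_eq, Real.sq_sqrt, Real.sq_sqrt] at h3
    · calc ∑ I : Fin N × Fin W, ‖g (I, S)‖ ^ 2
          = ∑ I : Fin N × Fin W, ‖Matrix.toEuclideanLin U v I‖ ^ 2 := by
            simp [hUv]
        _ ≤ ∑ I : Fin N × Fin W, ‖v I‖ ^ 2 := h3
        _ = ∑ I : Fin N × Fin W, ‖x (I, S)‖ ^ 2 := by simp [hv]
    · exact Finset.sum_nonneg fun _ _ => sq_nonneg _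
    · exact Finset.sum_nonneg fun _ _ => sq_nonneg _
  rw [EuclideanSpace.norm_eq, EuclideanSpace.norm_eq]
  apply Real.sqrt_le_sqrt
  calc ∑ p, ‖Matrix.toEuclideanLin A x p‖ ^ 2
      = ∑ p, ‖g (f p)‖ ^ 2 := by simp [happly]
    _ = ∑ p, ‖g p‖ ^ 2 :=
        Fintype.sum_bijective f hfinv.bijective _ _ (fun p => rfl)
    _ = ∑ S : Finset (Fin N), ∑ I : Fin N × Fin W, ‖g (I, S)‖ ^ 2 := by
        rw [Fintype.sum_prod_type, Finset.sum_comm]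
    _ ≤ ∑ S : Finset (Fin N), ∑ I : Fin N × Fin W, ‖x (I, S)‖ ^ 2 :=
        Finset.sum_le_sum fun S _ => hcol S
    _ = ∑ p : (Fin N × Fin W) × Finset (Fin N), ‖x p‖ ^ 2 := by
        rw [Fintype.sum_prod_type, Finset.sum_comm]
end

section
/- Tightness for DQC(1): let f(x) = (1/(2N))·Tr(O_{x^{(1)}}·H_N···O_{x^{(d)}}·H_N) on inputs x = (x^{(1)},…,x^{(d)}) ∈ {-1,1}^{dN}, where each O_{x^{(t)}} is the N×N diagonal sign matrix of the t-th block and H_N is the N×N Hadamard matrix. Then the nonzero Fourier coefficients of f correspond exactly to sets S picking one element i_t from each block, and f̂(S) = (1/(2N))·N^{−d/2}·(−1)^{⟨i_1,i_2⟩₂+⟨i_2,i_3⟩₂+…+⟨i_d,i_1⟩₂}; consequently the level-d Fourier growth of f is exactly N^d·(1/(2N))·N^{−d/2} = (1/2)·N^{(d−2)/2}. -/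
/-- The sign `±1` (as a complex number) associated to a boolean input bit. -/
def sgnC (b : Bool) : ℂ := if b then -1 else 1

/-- Complex-valued Fourier coefficient `f̂(S) = E_x[f(x)·∏_{i∈S} x_i]`. -/
noncomputable def bFourierCoeffC {ι : Type*} [Fintype ι] [DecidableEq ι]
    (f : (ι → Bool) → ℂ) (S : Finset ι) : ℂ :=
  (∑ x, f x * ∏ i ∈ S, sgnC (x i)) / 2 ^ Fintype.card ι

/-- The `N×N` Hadamard matrix (`N = 2^n`), with rows and columns indexed by `{0,1}^n`
and entries `(1/√N)·(-1)^{⟨i,j⟩₂}`. -/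
noncomputable def Had (n : ℕ) : Matrix (Fin n → Fin 2) (Fin n → Fin 2) ℂ :=
  Matrix.of fun i j =>
    (((Real.sqrt (2 ^ n))⁻¹ : ℝ) : ℂ) * (-1) ^ (∑ k, (i k).val * (j k).val)

/-- The function `f(x) = (1/(2N))·Tr(O_{x^{(1)}}·H_N ⋯ O_{x^{(d)}}·H_N)` computed by
the `d`-query `DQC(1)` algorithm, on inputs consisting of `d` blocks of length
`N = 2^n` (variables indexed by `Fin d × (Fin n → Fin 2)`). -/
noncomputable def fDQC (n d : ℕ) (x : Fin d × (Fin n → Fin 2) → Bool) : ℂ :=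
  (2 * (2 : ℂ) ^ n)⁻¹ *
    (((List.finRange d).map fun t =>
        Matrix.diagonal (fun j => sgnC (x (t, j))) * Had n).prod).trace


set_option maxHeartbeats 1000000
set_option linter.unusedSectionVars false
open Finset


section entry
variable {V : Type*} [Fintype V] [DecidableEq V]

lemma listProd_apply : ∀ (m : ℕ) (M : Fin m → Matrix V V ℂ) (a b : V),
    (((List.finRange m).map M).prod) a b
      = ∑ p : Fin m → V,
          (∏ k : Fin m, M k ((Fin.cons a p : Fin (m+1) → V) k.castSucc)
              ((Fin.cons a p : Fin (m+1) → V) k.succ)) *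
            (if (Fin.cons a p : Fin (m+1) → V) (Fin.last m) = b then 1 else 0) := by
  intro m
  induction m with
  | zero =>
    intro M a b
    simp [Matrix.one_apply, eq_comm]
  | succ m ih =>
    intro M a b
    rw [List.finRange_succ, List.map_cons, List.prod_cons, List.map_map,
      Matrix.mul_apply]
    have h1 : ∀ c, (((List.finRange m).map (M ∘ Fin.succ)).prod) c b
        = ∑ p : Fin m → V,
          (∏ k : Fin m, M k.succ ((Fin.cons c p : Fin (m+1) → V) k.castSucc)
              ((Fin.cons c p : Fin (m+1) → V) k.succ)) *
            (if (Fin.cons c p : Fin (m+1) → V) (Fin.last m) = b then 1 else 0) := fun c => ih _ c b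
    simp only [h1, Finset.mul_sum]
    conv_rhs => rw [← Equiv.sum_comp (Fin.consEquiv (fun _ : Fin (m+1) => V))]
    rw [Fintype.sum_prod_type]
    refine Finset.sum_congr rfl fun c _ => Finset.sum_congr rfl fun p _ => ?_
    show _ = (∏ k : Fin (m+1), M k _ _) * _
    rw [Fin.prod_univ_succ]
    have hq0 : (Fin.cons a (Fin.cons c p) : Fin (m+2) → V) ((0 : Fin (m+1)).castSucc) = a := by
      simp
    have hq1 : (Fin.cons a (Fin.cons c p) : Fin (m+2) → V) ((0 : Fin (m+1)).succ) = c := by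
      simp [Fin.cons_succ]
    have hcs : ∀ k : Fin m,
        (Fin.cons a (Fin.cons c p) : Fin (m+2) → V) (k.succ.castSucc)
          = (Fin.cons c p : Fin (m+1) → V) k.castSucc := by
      intro k; rw [← Fin.succ_castSucc, Fin.cons_succ]
    have hss : ∀ k : Fin m,
        (Fin.cons a (Fin.cons c p) : Fin (m+2) → V) (k.succ.succ)
          = (Fin.cons c p : Fin (m+1) → V) k.succ := by
      intro k; rw [Fin.cons_succ]
    have hlast : (Fin.cons a (Fin.cons c p) : Fin (m+2) → V) (Fin.last (m+1))
        = (Fin.cons c p : Fin (m+1) → V) (Fin.last m) := by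
      rw [← Fin.succ_last, Fin.cons_succ]
    have he : (Fin.consEquiv fun _ : Fin (m+1) => V) (c, p) = Fin.cons c p := rfl
    simp only [he, hq0, hq1, hcs, hss, hlast]
    ring

end entry

section trace
variable {V : Type*} [Fintype V] [DecidableEq V]

lemma fin_zero_sub_one (m : ℕ) : (0 : Fin (m+1)) - 1 = Fin.last m := by
  rw [zero_sub]
  apply Fin.ext
  rw [Fin.coe_neg_one, Fin.val_last]

lemma fin_succ_sub_one {m : ℕ} (j : Fin m) : (j.succ : Fin (m+1)) - 1 = j.castSucc := by
  rw [← Fin.coeSucc_eq_succ, add_sub_cancel_right]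

lemma cons_last_castSucc {m : ℕ} (p : Fin (m+1) → V) (k : Fin (m+1)) :
    (Fin.cons (p (Fin.last m)) p : Fin (m+2) → V) k.castSucc = p (k - 1) := by
  induction k using Fin.cases with
  | zero => rw [fin_zero_sub_one]; simp
  | succ j => rw [fin_succ_sub_one, ← Fin.succ_castSucc, Fin.cons_succ]

lemma trace_listProd (d : ℕ) [NeZero d] (M : Fin d → Matrix V V ℂ) :
    (((List.finRange d).map M).prod).trace
      = ∑ i : Fin d → V, ∏ t : Fin d, M t (i t) (i (t + 1)) := by
  obtain ⟨m, rfl⟩ : ∃ m, d = m + 1 := ⟨d - 1, (Nat.succ_pred_eq_of_pos (NeZero.pos d)).symm⟩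
  rw [Matrix.trace]
  simp only [Matrix.diag, listProd_apply]
  rw [Finset.sum_comm]
  have h1 : ∀ p : Fin (m+1) → V,
      (∑ a : V, (∏ k : Fin (m+1), M k ((Fin.cons a p : Fin (m+2) → V) k.castSucc)
          ((Fin.cons a p : Fin (m+2) → V) k.succ)) *
        (if (Fin.cons a p : Fin (m+2) → V) (Fin.last (m+1)) = a then 1 else 0))
      = ∏ k : Fin (m+1), M k (p (k - 1)) (p k) := by
    intro p
    have hl : ∀ a : V, (Fin.cons a p : Fin (m+2) → V) (Fin.last (m+1)) = p (Fin.last m) := by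
      intro a; rw [← Fin.succ_last, Fin.cons_succ]
    simp only [hl, mul_ite, mul_one, mul_zero]
    rw [Finset.sum_ite_eq]
    simp only [Finset.mem_univ, if_true]
    refine Finset.prod_congr rfl fun k _ => ?_
    rw [cons_last_castSucc, Fin.cons_succ]
  simp only [h1]
  apply Fintype.sum_equiv ((Equiv.addRight (1 : Fin (m+1))).arrowCongr (Equiv.refl V))
  intro p
  refine Finset.prod_congr rfl fun k _ => ?_
  simp [Equiv.arrowCongr, sub_eq_add_neg]

end trace

lemma orth {ι : Type*} [Fintype ι] [DecidableEq ι] (T S : Finset ι) :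
    ∑ x : ι → Bool, (∏ i ∈ T, sgnC (x i)) * ∏ i ∈ S, sgnC (x i)
      = if T = S then (2 : ℂ) ^ Fintype.card ι else 0 := by
  have key : ∀ x : ι → Bool,
      (∏ i ∈ T, sgnC (x i)) * ∏ i ∈ S, sgnC (x i)
        = ∏ i, ((if i ∈ T then sgnC (x i) else 1) * (if i ∈ S then sgnC (x i) else 1)) := by
    intro x
    rw [Finset.prod_mul_distrib, Finset.prod_ite_mem, Finset.prod_ite_mem,
      Finset.univ_inter, Finset.univ_inter]
  simp only [key]
  rw [← Fintype.prod_sum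
    (fun i (b : Bool) => (if i ∈ T then sgnC b else 1) * (if i ∈ S then sgnC b else 1))]
  by_cases hTS : T = S
  · subst hTS
    rw [if_pos rfl]
    have h2 : (∏ i : ι, ∑ b : Bool,
        (if i ∈ T then sgnC b else 1) * (if i ∈ T then sgnC b else 1)) = ∏ _i : ι, (2:ℂ) := by
      refine Finset.prod_congr rfl fun i _ => ?_
      by_cases hi : i ∈ T <;> simp [hi, Fintype.sum_bool, sgnC] <;> norm_num
    rw [h2, Finset.prod_const, Finset.card_univ]
  · rw [if_neg hTS]
    have : ∃ i, ¬(i ∈ T ↔ i ∈ S) := by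
      by_contra h
      push_neg at h
      exact hTS (Finset.ext fun i => by
        constructor
        · exact fun hi => ((h i).1 hi)
        · exact fun hi => ((h i).2 hi))
    obtain ⟨i, hi⟩ := this
    refine Finset.prod_eq_zero (Finset.mem_univ i) ?_
    rcases Decidable.em (i ∈ T) with h1 | h1 <;> rcases Decidable.em (i ∈ S) with h2 | h2 <;>
      simp [h1, h2, Fintype.sum_bool, sgnC] at hi ⊢

lemma pair_inj {n d : ℕ} (i : Fin d → Fin n → Fin 2) :
    Function.Injective fun t => (t, i t) := fun a b h => congrArg Prod.fst h

lemma Timage_inj {n d : ℕ} {i j : Fin d → Fin n → Fin 2}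
    (h : (Finset.univ.image fun t => (t, i t)) = Finset.univ.image fun t => (t, j t)) :
    i = j := by
  funext t
  have ht : (t, i t) ∈ Finset.univ.image fun t => (t, j t) := by
    rw [← h]; exact Finset.mem_image_of_mem _ (Finset.mem_univ t)
  obtain ⟨t', -, ht'⟩ := Finset.mem_image.1 ht
  obtain ⟨h1, h2⟩ := Prod.ext_iff.1 ht'
  subst h1; exact h2.symm

lemma fDQC_expand (n d : ℕ) [NeZero d] (x : Fin d × (Fin n → Fin 2) → Bool) :
    fDQC n d x = (2 * (2 : ℂ) ^ n)⁻¹ *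
      ∑ i : Fin d → Fin n → Fin 2,
        (∏ t, sgnC (x (t, i t))) * ∏ t, Had n (i t) (i (t + 1)) := by
  rw [fDQC, trace_listProd]
  congr 1
  refine Finset.sum_congr rfl fun i _ => ?_
  rw [← Finset.prod_mul_distrib]
  refine Finset.prod_congr rfl fun t _ => ?_
  rw [Matrix.diagonal_mul]


lemma expand_lemma (n d : ℕ) [NeZero d] (S : Finset (Fin d × (Fin n → Fin 2))) :
    (∑ x, fDQC n d x * ∏ s ∈ S, sgnC (x s))
      = (2 * (2 : ℂ) ^ n)⁻¹ * ∑ i : Fin d → Fin n → Fin 2,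
          (∏ t, Had n (i t) (i (t + 1))) *
            (∑ x : (Fin d × (Fin n → Fin 2)) → Bool,
              (∏ t, sgnC (x (t, i t))) * ∏ s ∈ S, sgnC (x s)) := by
  simp only [fDQC_expand, mul_assoc]
  rw [← Finset.mul_sum]
  congr 1
  simp only [Finset.sum_mul]
  rw [Finset.sum_comm]
  refine Finset.sum_congr rfl fun i _ => ?_
  rw [Finset.mul_sum]
  refine Finset.sum_congr rfl fun x _ => by ring

lemma coeff_formula (n d : ℕ) [NeZero d] (S : Finset (Fin d × (Fin n → Fin 2))) :
    bFourierCoeffC (fDQC n d) S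
      = (2 * (2 : ℂ) ^ n)⁻¹ * ∑ i : Fin d → Fin n → Fin 2,
          (if (Finset.univ.image fun t => (t, i t)) = S
           then ∏ t, Had n (i t) (i (t + 1)) else 0) := by
  set D := Fintype.card (Fin d × (Fin n → Fin 2)) with hD
  have hx : ∀ i : Fin d → Fin n → Fin 2,
      (∑ x : (Fin d × (Fin n → Fin 2)) → Bool,
        (∏ t, sgnC (x (t, i t))) * ∏ s ∈ S, sgnC (x s))
        = if (Finset.univ.image fun t => (t, i t)) = S then (2:ℂ) ^ D else 0 := by
    intro i
    have h1 : ∀ x : (Fin d × (Fin n → Fin 2)) → Bool,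
        ∏ t, sgnC (x (t, i t))
          = ∏ s ∈ Finset.univ.image fun t => (t, i t), sgnC (x s) := by
      intro x
      rw [Finset.prod_image fun a _ b _ h => pair_inj i h]
    simp only [h1]
    exact orth _ _
  rw [bFourierCoeffC, expand_lemma]
  simp only [hx]
  have h2D : ((2:ℂ) ^ D) ≠ 0 := pow_ne_zero _ two_ne_zero
  rw [mul_div_assoc]
  congr 1
  rw [Finset.sum_div]
  refine Finset.sum_congr rfl fun i _ => ?_
  by_cases h : (Finset.univ.image fun t => (t, i t)) = S
  · rw [if_pos h, if_pos h, mul_div_assoc, div_self h2D, mul_one]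
  · rw [if_neg h, if_neg h, mul_zero, zero_div]

lemma had_prod (n d : ℕ) [NeZero d] (i : Fin d → Fin n → Fin 2) :
    (∏ t, Had n (i t) (i (t + 1)))
      = (((Real.sqrt (2 ^ n))⁻¹ : ℝ) : ℂ) ^ d *
          (-1) ^ (∑ t : Fin d, ∑ k, (i t k).val * (i (t + 1) k).val) := by
  have h : ∀ t : Fin d, Had n (i t) (i (t + 1))
      = (((Real.sqrt (2 ^ n))⁻¹ : ℝ) : ℂ) * (-1) ^ (∑ k, (i t k).val * (i (t + 1) k).val) :=
    fun t => rfl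
  simp only [h]
  rw [Finset.prod_mul_distrib, Finset.prod_const, Finset.card_univ, Fintype.card_fin,
    Finset.prod_pow_eq_pow_sum]

lemma coeff_at_image (n d : ℕ) [NeZero d] (i : Fin d → Fin n → Fin 2) :
    bFourierCoeffC (fDQC n d) (Finset.univ.image fun t => (t, i t))
      = (2 * (2 : ℂ) ^ n)⁻¹ * (((Real.sqrt (2 ^ n))⁻¹ : ℝ) : ℂ) ^ d *
          (-1) ^ (∑ t : Fin d, ∑ k, (i t k).val * (i (t + 1) k).val) := by
  rw [coeff_formula]
  rw [Finset.sum_eq_single i (fun j _ hji => if_neg fun h => hji (Timage_inj h))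
    (fun h => absurd (Finset.mem_univ i) h)]
  rw [if_pos rfl, had_prod, mul_assoc]

lemma coeff_support (n d : ℕ) [NeZero d] (S : Finset (Fin d × (Fin n → Fin 2)))
    (hS : bFourierCoeffC (fDQC n d) S ≠ 0) :
    ∃ i : Fin d → Fin n → Fin 2, S = Finset.univ.image fun t => (t, i t) := by
  by_contra h
  push_neg at h
  apply hS
  rw [coeff_formula]
  rw [Finset.sum_eq_zero fun i _ => if_neg fun he => h i he.symm, mul_zero]

lemma realid (n d : ℕ) :
    (((2^n)^d : ℕ) : ℝ) * ((2 * 2^n : ℝ)⁻¹ * ((Real.sqrt (2^n))⁻¹)^d)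
      = (1/2) * ((2:ℝ)^n) ^ (((d:ℝ) - 2)/2) := by
  set r : ℝ := 2^n with hrdef
  have hr : (0:ℝ) < r := by positivity
  have h1 : (((2^n)^d : ℕ) : ℝ) = r ^ ((d:ℝ)) := by
    push_cast
    rw [← Real.rpow_natCast (r) d]
  have h2 : ((Real.sqrt r)⁻¹)^d = r ^ ((-(1:ℝ)/2) * d) := by
    rw [Real.sqrt_eq_rpow, ← Real.rpow_neg hr.le, ← Real.rpow_natCast (r ^ (-((1:ℝ)/2))) d,
      ← Real.rpow_mul hr.le]
    norm_num
  have h3 : (2 * r : ℝ)⁻¹ = 2⁻¹ * r ^ (-1:ℝ) := by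
    rw [mul_inv, Real.rpow_neg_one]
  rw [h1, h2, h3]
  rw [show r^((d:ℝ)) * (2⁻¹ * r^(-1:ℝ) * r^((-(1:ℝ)/2)*d))
      = 2⁻¹ * (r^((d:ℝ)) * r^(-1:ℝ) * r^((-(1:ℝ)/2)*d)) from by ring]
  rw [← Real.rpow_add hr, ← Real.rpow_add hr]
  rw [show (d:ℝ) + -1 + (-(1:ℝ)/2)*d = ((d:ℝ) - 2)/2 from by ring]
  norm_num

lemma coeff_norm (n d : ℕ) [NeZero d] (i : Fin d → Fin n → Fin 2) :
    ‖bFourierCoeffC (fDQC n d) (Finset.univ.image fun t => (t, i t))‖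
      = (2 * 2^n : ℝ)⁻¹ * ((Real.sqrt (2^n))⁻¹)^d := by
  rw [coeff_at_image, norm_mul, norm_mul, norm_pow, norm_pow, norm_neg, norm_one, one_pow,
    mul_one]
  congr 1
  · rw [norm_inv]
    congr 1
    rw [show (2 * (2:ℂ)^n) = (((2 * 2^n : ℝ)):ℂ) by push_cast; ring, Complex.norm_real,
      Real.norm_eq_abs, abs_of_pos (by positivity)]
  · congr 1
    rw [Complex.norm_real, Real.norm_eq_abs, abs_of_nonneg (by positivity)]

lemma part3 (n d : ℕ) [NeZero d] :
    (∑ S ∈ Finset.univ.filter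
          (fun S : Finset (Fin d × (Fin n → Fin 2)) => S.card = d),
        ‖bFourierCoeffC (fDQC n d) S‖)
      = (1 / 2) * ((2 : ℝ) ^ n) ^ (((d : ℝ) - 2) / 2) := by
  have hsub : (Finset.univ.image
        fun i : Fin d → Fin n → Fin 2 => Finset.univ.image fun t => (t, i t))
      ⊆ Finset.univ.filter (fun S : Finset (Fin d × (Fin n → Fin 2)) => S.card = d) := by
    intro S hS
    rw [Finset.mem_filter]
    refine ⟨Finset.mem_univ _, ?_⟩
    obtain ⟨i, -, rfl⟩ := Finset.mem_image.1 hS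
    rw [Finset.card_image_of_injective _ (pair_inj i), Finset.card_univ, Fintype.card_fin]
  have hzero : ∀ S ∈ Finset.univ.filter
      (fun S : Finset (Fin d × (Fin n → Fin 2)) => S.card = d),
      S ∉ (Finset.univ.image
        fun i : Fin d → Fin n → Fin 2 => Finset.univ.image fun t => (t, i t)) →
      ‖bFourierCoeffC (fDQC n d) S‖ = 0 := by
    intro S _ hSim
    by_contra hne
    have h0 : bFourierCoeffC (fDQC n d) S ≠ 0 := fun h => hne (by rw [h, norm_zero])
    obtain ⟨i, rfl⟩ := coeff_support n d S h0
    exact hSim (Finset.mem_image.2 ⟨i, Finset.mem_univ i, rfl⟩)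
  rw [← Finset.sum_subset hsub hzero,
    Finset.sum_image (fun i _ j _ h => Timage_inj h)]
  simp only [coeff_norm]
  rw [Finset.sum_const, Finset.card_univ]
  simp only [Fintype.card_fun, Fintype.card_fin]
  rw [nsmul_eq_mul, realid]

/-- Tightness for `DQC(1)`: the nonzero Fourier coefficients of `fDQC` correspond
exactly to sets `S` picking one element `i_t` from each block, with
`f̂(S) = (1/(2N))·N^{−d/2}·(−1)^{⟨i_1,i_2⟩₂+⋯+⟨i_d,i_1⟩₂}`; consequently the
level-`d` Fourier growth of `f` is exactly `(1/2)·N^{(d−2)/2}`. -/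
theorem dqc1_tightness (n d : ℕ) [NeZero d] :
    (∀ S : Finset (Fin d × (Fin n → Fin 2)),
        bFourierCoeffC (fDQC n d) S ≠ 0 →
        ∃ i : Fin d → Fin n → Fin 2, S = Finset.univ.image fun t => (t, i t)) ∧
    (∀ i : Fin d → Fin n → Fin 2,
        bFourierCoeffC (fDQC n d) (Finset.univ.image fun t => (t, i t))
          = (2 * (2 : ℂ) ^ n)⁻¹ * (((Real.sqrt (2 ^ n))⁻¹ : ℝ) : ℂ) ^ d *
              (-1) ^ (∑ t : Fin d, ∑ k, (i t k).val * (i (t + 1) k).val)) ∧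
    (∑ S ∈ Finset.univ.filter
          (fun S : Finset (Fin d × (Fin n → Fin 2)) => S.card = d),
        ‖bFourierCoeffC (fDQC n d) S‖)
      = (1 / 2) * ((2 : ℝ) ^ n) ^ (((d : ℝ) - 2) / 2) := by
  exact ⟨fun S hS => coeff_support n d S hS, fun i => coeff_at_image n d i, part3 n d⟩
end
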